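/- Let q₀(z,t) = z̄²(t²+|z|⁴)^{2/3} / (|z|^{8/3}(t+i|z|²)²) on ℍ minus the t-axis, and for y ∈ (0,π), |β| = 1 let δ_{y,β}(s) = ( √(e^s sin y) β e^{−(is/2) cot y}, e^s cos y ), s ∈ (0, 2 ln r). Then q₀(δ_{y,β}(s)) · (δ'_{y,β,1}(s))² = −1 / (4 sin^{4/3} y) for all s, so δ_{y,β} is a vertical trajectory of q₀, and its q₀-length equals ln(r) / sin^{2/3}(y). -/

import Mathlib

/-!
On the radial curve the first component is `δ₁(s) = √(sin y)·β·e^{sμ}` with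
`μ = (1 - i cot y)/2`, so `δ₁' = μ δ₁`, `|δ₁|² = eˢ sin y` and `t + i|δ₁|² = eˢ (cos y + i sin y)`.
Hence `δ̄₁ δ₁' / (t + i|δ₁|²) = -i/2` for every `s`, while the real factor
`(t² + |δ₁|⁴)^{2/3} / |δ₁|^{8/3}` is `sin^{-4/3} y`. So `q₀(δ) δ₁'²` is the negative constant
`-1/(4 sin^{4/3} y)`, and the `q₀`-length density is the constant `1/(2 sin^{2/3} y)`.
-/

open Set Complex MeasureTheory

/-- The quadratic differential `q₀(z,t) = z̄²(t²+|z|⁴)^{2/3}/(|z|^{8/3}(t+i|z|²)²)`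
on `ℍ` minus the `t`-axis. -/
noncomputable def q0 (p : ℂ × ℝ) : ℂ :=
  (starRingEnd ℂ) p.1 ^ 2 * (((p.2 ^ 2 + ‖p.1‖ ^ 4) ^ (2/3 : ℝ) : ℝ) : ℂ) /
    (((‖p.1‖ ^ (8/3 : ℝ) : ℝ) : ℂ) *
      ((p.2 : ℂ) + Complex.I * ((‖p.1‖ ^ 2 : ℝ) : ℂ)) ^ 2)

/-- The ℂ-component of the radial curve
`δ_{y,β}(s) = (√(eˢ sin y)·β e^{−(is/2)cot y}, eˢ cos y)`. -/
noncomputable def radCurve1 (y : ℝ) (β : ℂ) (s : ℝ) : ℂ :=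
  (Real.sqrt (Real.exp s * Real.sin y) : ℂ) * β *
    Complex.exp (-(Complex.I * s / 2) * ((Real.cos y / Real.sin y : ℝ) : ℂ))

/-- The ℝ-component of the radial curve `δ_{y,β}`. -/
noncomputable def radCurve2 (y : ℝ) (s : ℝ) : ℝ :=
  Real.exp s * Real.cos y

lemma q0_mul_sq (z : ℂ) (t : ℝ) (v : ℂ) :
    q0 (z, t) * v ^ 2 =
      (((t ^ 2 + ‖z‖ ^ 4) ^ (2/3 : ℝ) / ‖z‖ ^ (8/3 : ℝ) : ℝ) : ℂ) *
        ((starRingEnd ℂ) z * v / ((t : ℂ) + I * ((‖z‖ ^ 2 : ℝ) : ℂ))) ^ 2 := by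
  simp only [q0, div_eq_mul_inv, mul_inv, mul_pow, inv_pow, ofReal_mul, ofReal_inv]
  ring

lemma sqrt_norm_mul_norm_eq_sqrt_norm_mul_sq (q v : ℂ) :
    Real.sqrt ‖q‖ * ‖v‖ = Real.sqrt ‖q * v ^ 2‖ := by
  rw [norm_mul, norm_pow, Real.sqrt_mul (norm_nonneg _), Real.sqrt_sq (norm_nonneg _)]

noncomputable def radRate (y : ℝ) : ℂ := (1 - I * ((Real.cos y / Real.sin y : ℝ) : ℂ)) / 2

lemma radCurve1_eq_mul_exp (y : ℝ) (β : ℂ) :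
    radCurve1 y β = fun s : ℝ => (Real.sqrt (Real.sin y) * β : ℂ) * exp (s * radRate y) := by
  funext s
  have hexp_split : exp (s * radRate y) =
      exp ((s / 2 : ℝ) : ℂ) * exp (-(I * s / 2) * ((Real.cos y / Real.sin y : ℝ) : ℂ)) := by
    rw [← exp_add, radRate]
    congr 1
    generalize ((Real.cos y / Real.sin y : ℝ) : ℂ) = k
    push_cast
    ring
  rw [radCurve1, Real.sqrt_mul (Real.exp_nonneg s), ← Real.exp_half, hexp_split, ofReal_mul, ofReal_exp]
  ring

lemma hasDerivAt_radCurve1 (y : ℝ) (β : ℂ) (s : ℝ) :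
    HasDerivAt (radCurve1 y β) (radCurve1 y β s * radRate y) s := by
  rw [radCurve1_eq_mul_exp]
  simpa [mul_assoc] using
    (((hasDerivAt_id s).ofReal_comp.mul_const (radRate y)).cexp).const_mul
      ((Real.sqrt (Real.sin y) * β : ℂ))

lemma norm_radCurve1 (y : ℝ) {β : ℂ} (hβ : ‖β‖ = 1) (s : ℝ) :
    ‖radCurve1 y β s‖ = Real.sqrt (Real.exp s * Real.sin y) := by
  rw [radCurve1, norm_mul, norm_mul, hβ, norm_real, Real.norm_of_nonneg (Real.sqrt_nonneg _),
    norm_exp]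
  generalize Real.cos y / Real.sin y = k
  simp

lemma realFactor_q0_radCurve {y : ℝ} {β : ℂ} (hy : 0 < Real.sin y) (hβ : ‖β‖ = 1) (s : ℝ) :
    ((radCurve2 y s) ^ 2 + ‖radCurve1 y β s‖ ^ 4) ^ (2/3 : ℝ) / ‖radCurve1 y β s‖ ^ (8/3 : ℝ)
      = 1 / Real.sin y ^ (4/3 : ℝ) := by
  have hE := Real.exp_pos s
  have hnorm_sq : ‖radCurve1 y β s‖ ^ 2 = Real.exp s * Real.sin y := by
    rw [norm_radCurve1 y hβ, Real.sq_sqrt (by positivity)]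
  have hsum : (radCurve2 y s) ^ 2 + ‖radCurve1 y β s‖ ^ 4 = Real.exp s ^ 2 := by
    rw [show ‖radCurve1 y β s‖ ^ 4 = (‖radCurve1 y β s‖ ^ 2) ^ 2 by ring, hnorm_sq, radCurve2]
    linear_combination Real.exp s ^ 2 * Real.cos_sq_add_sin_sq y
  have hnorm_rpow : ‖radCurve1 y β s‖ ^ (8/3 : ℝ) = (Real.exp s * Real.sin y) ^ (4/3 : ℝ) := by
    rw [← hnorm_sq, ← Real.rpow_natCast, ← Real.rpow_mul (norm_nonneg _)]
    norm_num
  rw [hsum, hnorm_rpow, ← Real.rpow_natCast, ← Real.rpow_mul hE.le, Real.mul_rpow hE.le hy.le]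
  field_simp
  norm_num

lemma conj_mul_deriv_div_radCurve {y : ℝ} {β : ℂ} (hy : 0 < Real.sin y) (hβ : ‖β‖ = 1) (s : ℝ) :
    (starRingEnd ℂ) (radCurve1 y β s) * (radCurve1 y β s * radRate y) /
        ((radCurve2 y s : ℂ) + I * ((‖radCurve1 y β s‖ ^ 2 : ℝ) : ℂ)) = -I / 2 := by
  have hnorm_sq : ‖radCurve1 y β s‖ ^ 2 = Real.exp s * Real.sin y := by
    rw [norm_radCurve1 y hβ, Real.sq_sqrt (by positivity)]
  rw [← mul_assoc, conj_mul', ← ofReal_pow, hnorm_sq, radCurve2, radRate]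
  have hE := Real.exp_pos s
  generalize Real.sin y = σ at *
  generalize Real.cos y = c
  generalize Real.exp s = E at *
  have hden : ((E * c : ℝ) : ℂ) + I * ((E * σ : ℝ) : ℂ) ≠ 0 := fun h => by
    simpa [hy.ne', hE.ne'] using congrArg im h
  have hσ : (σ : ℂ) ≠ 0 := ofReal_ne_zero.mpr hy.ne'
  rw [div_eq_iff hden]
  push_cast
  field_simp
  linear_combination (E * σ : ℂ) * I_sq

lemma q0_radCurve_mul_deriv_sq {y : ℝ} {β : ℂ} (hy : 0 < Real.sin y) (hβ : ‖β‖ = 1) (s : ℝ) :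
    q0 (radCurve1 y β s, radCurve2 y s) * (deriv (radCurve1 y β) s) ^ 2
      = (((-1 / (4 * Real.sin y ^ (4/3 : ℝ)) : ℝ)) : ℂ) := by
  rw [(hasDerivAt_radCurve1 y β s).deriv, q0_mul_sq, realFactor_q0_radCurve hy hβ,
    conj_mul_deriv_div_radCurve hy hβ]
  push_cast
  linear_combination (1 / (4 * ((Real.sin y ^ (4/3 : ℝ) : ℝ) : ℂ))) * I_sq

lemma qLength_density_radCurve {y : ℝ} {β : ℂ} (hy : 0 < Real.sin y) (hβ : ‖β‖ = 1) (s : ℝ) :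
    Real.sqrt ‖q0 (radCurve1 y β s, radCurve2 y s)‖ * ‖deriv (radCurve1 y β) s‖
      = 1 / (2 * Real.sin y ^ (2/3 : ℝ)) := by
  have hsq : (1 / (2 * Real.sin y ^ (2/3 : ℝ))) ^ 2 = 1 / (4 * Real.sin y ^ (4/3 : ℝ)) := by
    rw [div_pow, one_pow, mul_pow, ← Real.rpow_natCast (_ ^ _), ← Real.rpow_mul hy.le]
    norm_num
  rw [sqrt_norm_mul_norm_eq_sqrt_norm_mul_sq, q0_radCurve_mul_deriv_sq hy hβ, norm_real,
    Real.norm_eq_abs, neg_div, abs_neg, abs_of_pos (by positivity), ← hsq,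
    Real.sqrt_sq (by positivity)]

/-- Along the radial curves `δ_{y,β}`, one has
`q₀(δ_{y,β}(s))·(δ'_{y,β,1}(s))² = −1/(4 sin^{4/3} y)`, so each `δ_{y,β}` is a vertical
trajectory of `q₀`, and its `q₀`-length on `(0, 2 ln r)` equals `ln(r)/sin^{2/3}(y)`. -/
theorem stmt13 (r y : ℝ) (hr : 1 < r) (hy : y ∈ Set.Ioo 0 Real.pi)
    (β : ℂ) (hβ : ‖β‖ = 1) :
    (∀ s ∈ Set.Ioo 0 (2 * Real.log r),
      q0 (radCurve1 y β s, radCurve2 y s) * (deriv (radCurve1 y β) s) ^ 2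
        = (((-1 / (4 * Real.sin y ^ (4/3 : ℝ)) : ℝ)) : ℂ)) ∧
    (∫ s in Set.Ioo 0 (2 * Real.log r),
        Real.sqrt ‖q0 (radCurve1 y β s, radCurve2 y s)‖ *
          ‖deriv (radCurve1 y β) s‖)
      = Real.log r / Real.sin y ^ (2/3 : ℝ) := by
  have hsin : 0 < Real.sin y := Real.sin_pos_of_pos_of_lt_pi hy.1 hy.2
  refine ⟨fun s _ => q0_radCurve_mul_deriv_sq hsin hβ s, ?_⟩
  have hlog : 0 ≤ 2 * Real.log r := by linarith [Real.log_pos hr]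
  simp only [qLength_density_radCurve hsin hβ]
  rw [setIntegral_const, measureReal_def, Real.volume_Ioo, sub_zero, ENNReal.toReal_ofReal hlog,
    smul_eq_mul]
  field_simp
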